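/- Suppose τ ∈ (0,1) and g is a horizontally valid two-dimensional move with g + gᵀ = t_τ. Then ĝ(α,2) ≤ 2 − P_{2−τ}(α) for every α ∈ [2,∞]. -/

import Mathlib

open scoped BigOperators Classical

noncomputable section

/-- The profile `P_x` of a point `x ∈ ℝ≥0`, viewed as a function on `[1,∞]`
(the extended reals `EReal` model the interval with its point `∞ = ⊤`):
`P_x(α) = 1` for `α ∈ [1,2)`, `P_x(α) = (xα - x)/(x + α - 2)` for `α ∈ [2,∞)`,
and `P_x(∞) = x` (with the conventions `P_0(α) = 0` for `α ∈ [2,∞]`, which the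
formula also yields since division by zero is zero). -/
def Pfun (x : ℝ) (α : EReal) : ℝ :=
  if α = ⊤ then x
  else if α.toReal < 2 then 1
  else (x * α.toReal - x) / (x + α.toReal - 2)

/-- A one-dimensional move: a finitely supported function on `ℝ≥0`
(modeled as a function on `ℝ` vanishing on the negatives). -/
def IsMove1 (f : ℝ → ℝ) : Prop :=
  (Function.support f).Finite ∧ ∀ x : ℝ, x < 0 → f x = 0

/-- Validity of a one-dimensional move. -/
def IsValid1 (f : ℝ → ℝ) : Prop :=
  (∑ᶠ x, f x) = 0 ∧
  (∀ lam : ℝ, 0 < lam → 0 ≤ ∑ᶠ x, (x / (x + lam)) * f x) ∧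
  0 ≤ ∑ᶠ x, x * f x

/-- The profile of a one-dimensional move. -/
def prof1 (f : ℝ → ℝ) (α : EReal) : ℝ := ∑ᶠ x, f x * Pfun x α

/-- A two-dimensional move: a finitely supported function on `ℝ≥0 × ℝ≥0`. -/
def IsMove2 (q : ℝ × ℝ → ℝ) : Prop :=
  (Function.support q).Finite ∧ ∀ p : ℝ × ℝ, p.1 < 0 ∨ p.2 < 0 → q p = 0

/-- A two-dimensional move is horizontally valid if all of its rows are valid. -/
def HorizValid (q : ℝ × ℝ → ℝ) : Prop := ∀ y : ℝ, IsValid1 fun x => q (x, y)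

/-- A two-dimensional move is vertically valid if all of its columns are valid. -/
def VertValid (q : ℝ × ℝ → ℝ) : Prop := ∀ x : ℝ, IsValid1 fun y => q (x, y)

/-- The two-variable profile of a two-dimensional move. -/
def prof2 (q : ℝ × ℝ → ℝ) (α β : EReal) : ℝ :=
  ∑ᶠ p : ℝ × ℝ, q p * Pfun p.1 α * Pfun p.2 β

/-- The transpose move `qᵀ(x,y) = q(y,x)`. -/
def transpose (q : ℝ × ℝ → ℝ) : ℝ × ℝ → ℝ := fun p => q (p.2, p.1)

/-- `pt x y` is the indicator move `⟦x,y⟧`. -/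
def pt (x y : ℝ) : ℝ × ℝ → ℝ := fun p => if p = (x, y) then 1 else 0

/-- The move `t_τ = 2·⟦1,1⟧ - ⟦2-τ,0⟧ - ⟦0,2-τ⟧`. -/
def tMove (τ : ℝ) : ℝ × ℝ → ℝ :=
  fun p => 2 * pt 1 1 p - pt (2 - τ) 0 p - pt 0 (2 - τ) p

/-- `slice g b` is the move `g_b`: the part of `g` on the horizontal line `y = b`. -/
def hslice (g : ℝ × ℝ → ℝ) (b : ℝ) : ℝ × ℝ → ℝ := fun p => if p.2 = b then g p else 0

/-! Write `Pₓ(α) = (α - 1) · x / (x + (α - 2))` for finite `α ≥ 2`; at `α = 2` this is the indicator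
of `x ≠ 0`. So the `λ`- and `∞`-conditions of validity make the profile of a valid one-dimensional
move nonnegative on `[2, ∞]` (at `α = 2` by letting `λ → 0⁺`), and the zero-sum condition gives
`q̂(2, β) = -∑ᵧ q(0, y) Pᵧ(β)` for a horizontally valid `q`.

Taking profiles in `g + gᵀ = t_τ` gives `ĝ(α, 2) + ĝ(2, α) = t̂_τ(α, 2) = 2`, and taking profiles
in the column identity `g(0, ·) + g(·, 0) = t_τ(0, ·)` gives
`ĝ(α, 2) = 2 - P_{2-τ}(α) - ĝ₀(α)`, where `ĝ₀` is the profile of the row `g(·, 0)`, which is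
nonnegative. -/

lemma Pfun_top (x : ℝ) : Pfun x ⊤ = x := if_pos rfl

lemma Pfun_coe_of_two_le {a : ℝ} (ha : 2 ≤ a) (x : ℝ) :
    Pfun x a = (a - 1) * (x / (x + (a - 2))) := by
  simp only [Pfun, EReal.coe_ne_top, if_false, EReal.toReal_coe, not_lt.2 ha]
  ring

lemma Pfun_coe_two (x : ℝ) : Pfun x (2 : ℝ) = if x = 0 then 0 else 1 := by
  rw [Pfun_coe_of_two_le le_rfl]
  split_ifs with hx
  · simp [hx]
  · rw [sub_self, add_zero, div_self hx]
    norm_num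

lemma Pfun_one_of_two_le {α : EReal} (hα : ((2 : ℝ) : EReal) ≤ α) : Pfun 1 α = 1 := by
  induction α using EReal.rec with
  | bot => simp at hα
  | coe a =>
    have ha : 2 ≤ a := EReal.coe_le_coe_iff.1 hα
    rw [Pfun_coe_of_two_le ha, show 1 + (a - 2) = a - 1 by ring, mul_one_div_cancel (by linarith)]
  | top => exact Pfun_top 1

lemma Pfun_zero_of_two_le {α : EReal} (hα : ((2 : ℝ) : EReal) ≤ α) : Pfun 0 α = 0 := by
  induction α using EReal.rec with
  | bot => simp at hα
  | coe a => simp [Pfun_coe_of_two_le (EReal.coe_le_coe_iff.1 hα)]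
  | top => exact Pfun_top 0

lemma IsMove1.nonneg_of_ne_zero {f : ℝ → ℝ} (hf : IsMove1 f) {x : ℝ} (hx : f x ≠ 0) : 0 ≤ x :=
  not_lt.1 fun hneg => hx (hf.2 x hneg)

lemma IsValid1.finsum_div_add_mul_nonneg {f : ℝ → ℝ} (hf : IsMove1 f) (hv : IsValid1 f)
    {l : ℝ} (hl : 0 ≤ l) : 0 ≤ ∑ᶠ x, x / (x + l) * f x := by
  rcases hl.eq_or_lt with rfl | hl
  · set s := hf.1.toFinset
    have hsupp : ∀ l : ℝ, (Function.support fun x => x / (x + l) * f x) ⊆ s := fun l =>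
      (Function.support_mul_subset_right _ _).trans hf.1.coe_toFinset.ge
    rw [finsum_eq_sum_of_support_subset _ (hsupp 0)]
    have hlim : Filter.Tendsto (fun l => ∑ x ∈ s, x / (x + l) * f x) (nhdsWithin 0 (Set.Ioi 0))
        (nhds (∑ x ∈ s, x / (x + 0) * f x)) := by
      refine tendsto_finsetSum s fun x hx => ?_
      rcases (hf.nonneg_of_ne_zero (hf.1.mem_toFinset.1 hx)).eq_or_lt with rfl | hx0
      · simp
      · refine ((tendsto_const_nhds.div (tendsto_const_nhds.add Filter.tendsto_id) ?_).mul_const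
          _).mono_left nhdsWithin_le_nhds
        simpa using hx0.ne'
    refine ge_of_tendsto hlim (eventually_nhdsWithin_of_forall fun l hl => ?_)
    simpa only [finsum_eq_sum_of_support_subset _ (hsupp l)] using hv.2.1 l hl
  · exact hv.2.1 l hl

lemma IsValid1.prof1_nonneg {f : ℝ → ℝ} (hf : IsMove1 f) (hv : IsValid1 f) {α : EReal}
    (hα : ((2 : ℝ) : EReal) ≤ α) : 0 ≤ prof1 f α := by
  induction α using EReal.rec with
  | bot => simp at hα
  | coe a =>
    have ha : 2 ≤ a := EReal.coe_le_coe_iff.1 hα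
    have h := mul_nonneg (sub_nonneg.2 (one_le_two.trans ha))
      (hv.finsum_div_add_mul_nonneg hf (sub_nonneg.2 ha))
    rw [mul_finsum] at h
    simpa only [prof1, Pfun_coe_of_two_le ha, mul_left_comm, mul_comm] using h
  | top => simpa only [prof1, Pfun_top, mul_comm] using hv.2.2

lemma prof1_coe_two {f : ℝ → ℝ} (hf : Function.HasFiniteSupport f) (hsum : ∑ᶠ x, f x = 0) :
    prof1 f (2 : ℝ) = -f 0 := by
  have h : ∀ x, f x * Pfun x (2 : ℝ) = f x - if x = 0 then f x else 0 := fun x => by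
    rw [Pfun_coe_two]; split_ifs <;> simp
  simp only [prof1, h]
  rw [finsum_sub_distrib hf, hsum, finsum_eq_single _ 0 fun x hx => if_neg hx, if_pos rfl,
    zero_sub]
  exact hf.subset fun x hx => (by simpa using hx : x = 0 ∧ f x ≠ 0).2

lemma prof1_add {f f' : ℝ → ℝ} (hf : Function.HasFiniteSupport f)
    (hf' : Function.HasFiniteSupport f') (α : EReal) :
    prof1 (f + f') α = prof1 f α + prof1 f' α := by
  simp only [prof1, Pi.add_apply, add_mul]
  exact finsum_add_distrib (hf.subset (Function.support_mul_subset_left _ _))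
    (hf'.subset (Function.support_mul_subset_left _ _))

lemma prof2_add {q q' : ℝ × ℝ → ℝ} (hq : Function.HasFiniteSupport q)
    (hq' : Function.HasFiniteSupport q') (α β : EReal) :
    prof2 (q + q') α β = prof2 q α β + prof2 q' α β := by
  simp only [prof2, Pi.add_apply, add_mul]
  have hweighted : ∀ r : ℝ × ℝ → ℝ, Function.HasFiniteSupport r →
      Function.HasFiniteSupport fun p => r p * Pfun p.1 α * Pfun p.2 β := fun _ hr =>
    hr.subset ((Function.support_mul_subset_left _ _).trans (Function.support_mul_subset_left _ _))
  exact finsum_add_distrib (hweighted q hq) (hweighted q' hq')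

lemma prof2_transpose (q : ℝ × ℝ → ℝ) (α β : EReal) : prof2 (transpose q) α β = prof2 q β α := by
  rw [prof2, ← finsum_comp_equiv (Equiv.prodComm ℝ ℝ)]
  simp only [prof2, transpose, Equiv.prodComm_apply, Prod.fst_swap, Prod.snd_swap, Prod.mk.eta,
    mul_right_comm]

lemma prof2_eq_finsum_prof1_row {q : ℝ × ℝ → ℝ} (hq : Function.HasFiniteSupport q)
    (α β : EReal) : prof2 q α β = ∑ᶠ y, prof1 (fun x => q (x, y)) α * Pfun y β := by
  rw [← prof2_transpose, prof2, finsum_curry _ ?_]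
  · simp only [prof1, transpose, finsum_mul, mul_right_comm]
  · exact (hq.comp_of_injective Prod.swap_injective).subset
      ((Function.support_mul_subset_left _ _).trans (Function.support_mul_subset_left _ _))

lemma prof2_coe_two_left {q : ℝ × ℝ → ℝ} (hq : Function.HasFiniteSupport q)
    (hrow : ∀ y, ∑ᶠ x, q (x, y) = 0) (β : EReal) :
    prof2 q (2 : ℝ) β = -prof1 (fun y => q (0, y)) β := by
  have hrow_fin : ∀ y, Function.HasFiniteSupport fun x => q (x, y) := fun y =>
    hq.comp_of_injective fun _ _ h => (Prod.mk.inj h).1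
  rw [prof2_eq_finsum_prof1_row hq, prof1, ← finsum_neg_distrib]
  exact finsum_congr fun y => by rw [prof1_coe_two (hrow_fin y) (hrow y), neg_mul]

lemma IsMove2.transpose {q : ℝ × ℝ → ℝ} (hq : IsMove2 q) : IsMove2 (transpose q) :=
  ⟨Function.HasFiniteSupport.comp_of_injective Prod.swap_injective hq.1,
    fun p hp => hq.2 p.swap hp.symm⟩

lemma IsMove2.row {q : ℝ × ℝ → ℝ} (hq : IsMove2 q) (y : ℝ) : IsMove1 fun x => q (x, y) :=
  ⟨Function.HasFiniteSupport.comp_of_injective (fun _ _ h => (Prod.mk.inj h).1) hq.1,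
    fun _ hx => hq.2 _ (Or.inl hx)⟩

lemma prof2_tMove_coe_two (τ : ℝ) {α : EReal} (hα : ((2 : ℝ) : EReal) ≤ α) :
    prof2 (tMove τ) α (2 : ℝ) = 2 := by
  have hP2 : ∀ y, Pfun y (2 : ℝ) = if y = 0 then 0 else 1 := Pfun_coe_two
  rw [prof2, finsum_eq_single _ (1, 1)]
  · simp [tMove, pt, hP2, Pfun_one_of_two_le hα]
  · rintro ⟨x, y⟩ hxy
    by_cases hy : y = 0
    · simp [hP2, hy]
    · by_cases hx : x = 0
      · simp [hx, Pfun_zero_of_two_le hα]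
      · simp_all [tMove, pt]

lemma prof1_tMove_col_zero {τ : ℝ} {α : EReal} (hα : ((2 : ℝ) : EReal) ≤ α) :
    prof1 (fun y => tMove τ (0, y)) α = -Pfun (2 - τ) α := by
  have h : ∀ y, tMove τ (0, y) * Pfun y α = -if y = 2 - τ then Pfun (2 - τ) α else 0 := by
    intro y
    by_cases hy : y = 0
    · subst hy
      split_ifs with h
      · rw [← h]
        simp [Pfun_zero_of_two_le hα]
      · simp [Pfun_zero_of_two_le hα]
    · split_ifs with h
      · subst h
        simp [tMove, pt, hy, Ne.symm hy]
      · simp [tMove, pt, hy, h]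
  simp only [prof1, h]
  rw [finsum_neg_distrib, finsum_eq_single _ (2 - τ) fun y hy => if_neg hy, if_pos rfl]

theorem stmt_9_general (τ : ℝ)
    (g : ℝ × ℝ → ℝ) (hmove : IsMove2 g) (hval : HorizValid g)
    (hsum : ∀ p, g p + transpose g p = tMove τ p) :
    ∀ α : EReal, ((2 : ℝ) : EReal) ≤ α →
      prof2 g α ((2 : ℝ) : EReal) ≤ 2 - Pfun (2 - τ) α := by
  intro α hα
  have hsym : prof2 g α (2 : ℝ) + prof2 g (2 : ℝ) α = 2 := by
    rw [← prof2_transpose g α (2 : ℝ), ← prof2_add hmove.1 hmove.transpose.1, Pi.add_def,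
      funext hsum, prof2_tMove_coe_two τ hα]
  have hcol : prof1 (fun y => g (0, y)) α + prof1 (fun x => g (x, 0)) α = -Pfun (2 - τ) α := by
    rw [← prof1_add (f := fun y => g (0, y)) (hmove.transpose.row 0).1 (hmove.row 0).1, Pi.add_def]
    exact (congrArg (prof1 · α) (funext fun y => hsum (0, y))).trans (prof1_tMove_col_zero hα)
  have hrow0 := (hval 0).prof1_nonneg (hmove.row 0) hα
  rw [prof2_coe_two_left hmove.1 (fun y => (hval y).1)] at hsym
  linarith

/-- If `g` is horizontally valid and `g + gᵀ = t_τ`, then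
`ĝ(α,2) ≤ 2 - P_{2-τ}(α)` for all `α ∈ [2,∞]`. -/
theorem stmt_9 (τ : ℝ) (hτ : τ ∈ Set.Ioo (0 : ℝ) 1)
    (g : ℝ × ℝ → ℝ) (hmove : IsMove2 g) (hval : HorizValid g)
    (hsum : ∀ p, g p + transpose g p = tMove τ p) :
    ∀ α : EReal, ((2 : ℝ) : EReal) ≤ α →
      prof2 g α ((2 : ℝ) : EReal) ≤ 2 - Pfun (2 - τ) α :=
  stmt_9_general τ g hmove hval hsum
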